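/- Suppose Assumption (RC) holds: (i) x̄ is an M-stationary point of (P), ȳ ∈ Λ(x̄), and the upper error bound holds, i.e., there exist ρ_u > 0 and a neighborhood U of (x̄, c(x̄), ȳ) with ‖x − x̄‖ + ‖z − c(x̄)‖ + ‖y − ȳ‖ ≤ ρ_u·Θ(x, z, y) for all (x, z, y) ∈ U with z ∈ dom g; (ii) {(x^k, z^k, y^k)} is generated by the safeguarded implicit augmented Lagrangian algorithm with ε_k → 0; (iii) (x^k, y^k) → (x̄, ȳ); (iv) ŷ^k = y^{k−1} for all sufficiently large k. Assume additionally that ε_k = o(Θ_{k−1}), where Θ_k := Θ(x^k, z^k, y^k). Then: (1) for every q ∈ (0, 1) there exists μ̄(q) > 0 such that, if μ_k ≤ μ̄(q) for all sufficiently large k, then (x^k, z^k, y^k) → (x̄, c(x̄), ȳ) Q-linearly with rate q, i.e., eventually ‖x^k − x̄‖ + ‖z^k − c(x̄)‖ + ‖y^k − ȳ‖ ≤ q·(‖x^{k−1} − x̄‖ + ‖z^{k−1} − c(x̄)‖ + ‖y^{k−1} − ȳ‖); (2) if μ_k ↓ 0, then (x^k, z^k, y^k) → (x̄, c(x̄),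 ȳ) Q-superlinearly, i.e., the ratio of consecutive distances (‖x^k − x̄‖ + ‖z^k − c(x̄)‖ + ‖y^k − ȳ‖)/(‖x^{k−1} − x̄‖ + ‖z^{k−1} − c(x̄)‖ + ‖y^{k−1} − ȳ‖) tends to 0. -/

import Mathlib

open Filter Topology Bornology

noncomputable section

/-- Euclidean space `ℝ^d`. -/
abbrev Euc (d : ℕ) := EuclideanSpace ℝ (Fin d)

namespace Paper

variable {n m : ℕ}

/-- The effective domain of an extended-real-valued function. -/
def edom (g : Euc m → EReal) : Set (Euc m) := {z | g z < ⊤}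

/-- `g` maps into `ℝ ∪ {∞}` and is proper (its domain is nonempty). -/
def ProperFn (g : Euc m → EReal) : Prop := (∀ z, g z ≠ ⊥) ∧ ∃ z, g z < ⊤

/-- `z ↦ g z + ‖z‖²/(2μ)` is bounded below. -/
def ProxBoundedWith (g : Euc m → EReal) (μ : ℝ) : Prop :=
  ∃ b : ℝ, ∀ z, (b : EReal) ≤ g z + ((‖z‖ ^ 2 / (2 * μ) : ℝ) : EReal)

/-- `g` is prox-bounded. -/
def ProxBounded (g : Euc m → EReal) : Prop := ∃ μ : ℝ, 0 < μ ∧ ProxBoundedWith g μ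

/-- `0 < μ < μ_g`, where `μ_g` is the threshold of prox-boundedness of `g`. -/
def BelowThreshold (g : Euc m → EReal) (μ : ℝ) : Prop :=
  0 < μ ∧ ∃ μ' : ℝ, μ < μ' ∧ ProxBoundedWith g μ'

/-- The tangent cone to `Ω` at `wbar`. -/
def tangentCone {E : Type*} [NormedAddCommGroup E] [NormedSpace ℝ E]
    (Ω : Set E) (wbar : E) : Set E :=
  {v | ∃ (t : ℕ → ℝ) (w : ℕ → E), (∀ k, 0 < t k) ∧ Tendsto t atTop (𝓝 0) ∧
        Tendsto w atTop (𝓝 v) ∧ ∀ k, wbar + t k • w k ∈ Ω}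

/-- The regular (Fréchet) subdifferential of `g` at `zbar`. -/
def regSubdiff (g : Euc m → EReal) (zbar : Euc m) : Set (Euc m) :=
  {v | 0 ≤ liminf (fun z : Euc m =>
      (g z - g zbar - ((inner ℝ v (z - zbar) : ℝ) : EReal)) / ((‖z - zbar‖ : ℝ) : EReal))
      (𝓝[≠] zbar)}

/-- The limiting (Mordukhovich) subdifferential of `g` at `zbar`. -/
def limSubdiff (g : Euc m → EReal) (zbar : Euc m) : Set (Euc m) :=
  {v | ∃ zs vs : ℕ → Euc m, Tendsto zs atTop (𝓝 zbar) ∧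
        Tendsto (fun k => g (zs k)) atTop (𝓝 (g zbar)) ∧
        Tendsto vs atTop (𝓝 v) ∧ ∀ k, vs k ∈ regSubdiff g (zs k)}

/-- The subderivative `dg(zbar)(v)`. -/
def subderiv (g : Euc m → EReal) (zbar v : Euc m) : EReal :=
  liminf (fun p : ℝ × Euc m => (g (zbar + p.1 • p.2) - g zbar) / ((p.1 : ℝ) : EReal))
    ((𝓝[>] (0 : ℝ)) ×ˢ 𝓝 v)

/-- The second subderivative `d²g(zbar, ybar)(v)`. -/
def secondSubderiv (g : Euc m → EReal) (zbar ybar v : Euc m) : EReal :=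
  liminf (fun p : ℝ × Euc m =>
      (g (zbar + p.1 • p.2) - g zbar - ((p.1 * (inner ℝ ybar p.2 : ℝ) : ℝ) : EReal)) /
        ((p.1 ^ 2 / 2 : ℝ) : EReal))
    ((𝓝[>] (0 : ℝ)) ×ˢ 𝓝 v)

/-- The Lagrangian `L(·, y) = f + ⟨y, c ·⟩` of (P). -/
def LagFn (f : Euc n → ℝ) (c : Euc n → Euc m) (y : Euc m) : Euc n → ℝ :=
  fun x => f x + (inner ℝ y (c x) : ℝ)

/-- `∇ₓL(xbar, y) = 0`. -/
def gradLagZero (f : Euc n → ℝ) (c : Euc n → Euc m) (xbar : Euc n) (y : Euc m) : Prop :=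
  fderiv ℝ (LagFn f c y) xbar = 0

/-- The set `Λ(xbar)` of Lagrange multipliers of the M-stationarity system at `xbar`. -/
def Lambda (f : Euc n → ℝ) (c : Euc n → Euc m) (g : Euc m → EReal) (xbar : Euc n) :
    Set (Euc m) :=
  {y | gradLagZero f c xbar y ∧ y ∈ limSubdiff g (c xbar)}

/-- `∇²ₓₓL(xbar, y)[u, w]`. -/
def hessLag (f : Euc n → ℝ) (c : Euc n → Euc m) (xbar : Euc n) (y : Euc m) (u w : Euc n) : ℝ :=
  iteratedFDeriv ℝ 2 (LagFn f c y) xbar ![u, w]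

/-- The critical cone `C(xbar)` of (P). -/
def critCone (f : Euc n → ℝ) (c : Euc n → Euc m) (g : Euc m → EReal) (xbar : Euc n) :
    Set (Euc n) :=
  {u | ((fderiv ℝ f xbar u : ℝ) : EReal) + subderiv g (c xbar) (fderiv ℝ c xbar u) ≤ 0}

/-- The directional multiplier set `Λ(xbar, u)`. -/
def dirLambda (f : Euc n → ℝ) (c : Euc n → Euc m) (g : Euc m → EReal) (xbar : Euc n)
    (u : Euc n) : Set (Euc m) :=
  {y | gradLagZero f c xbar y ∧
    subderiv g (c xbar) (fderiv ℝ c xbar u) = ((inner ℝ y (fderiv ℝ c xbar u) : ℝ) : EReal) ∧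
    secondSubderiv g (c xbar) y (fderiv ℝ c xbar u) ≠ ⊥}

/-- The second-order sufficient condition (SOSC) for (P) at `xbar`. -/
def SOSC (f : Euc n → ℝ) (c : Euc n → Euc m) (g : Euc m → EReal) (xbar : Euc n) : Prop :=
  ∀ u ∈ critCone f c g xbar, u ≠ 0 → ∃ y ∈ dirLambda f c g xbar u,
    0 < ((hessLag f c xbar y u u : ℝ) : EReal) + secondSubderiv g (c xbar) y (fderiv ℝ c xbar u)

/-- The stationarity residual `Θ(x, z, y)`; the distance to the (possibly empty)
subdifferential is taken in `EReal` via an infimum. -/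
def Theta (f : Euc n → ℝ) (c : Euc n → Euc m) (g : Euc m → EReal)
    (x : Euc n) (z y : Euc m) : EReal :=
  ((‖fderiv ℝ (LagFn f c y) x‖ + ‖c x - z‖ : ℝ) : EReal) +
    ⨅ v ∈ limSubdiff g z, ((‖y - v‖ : ℝ) : EReal)

/-- The graphical derivative `D(∂g)(zbar, ybar)(v)` of the limiting subdifferential mapping. -/
def gDeriv (g : Euc m → EReal) (zbar ybar v : Euc m) : Set (Euc m) :=
  {η | (v, η) ∈ tangentCone {p : Euc m × Euc m | p.2 ∈ limSubdiff g p.1} (zbar, ybar)}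

/-- The Moreau envelope `g^μ(w)`. -/
def moreau (g : Euc m → EReal) (μ : ℝ) (w : Euc m) : EReal :=
  ⨅ z, (g z + ((‖z - w‖ ^ 2 / (2 * μ) : ℝ) : EReal))

/-- The augmented Lagrangian `L_μ(x, y)` of (P). -/
def ALfun (f : Euc n → ℝ) (c : Euc n → Euc m) (g : Euc m → EReal) (μ : ℝ)
    (x : Euc n) (y : Euc m) : EReal :=
  (f x : EReal) + moreau g μ (c x + μ • y) - ((μ / 2 * ‖y‖ ^ 2 : ℝ) : EReal)

/-- `xbar` is a strict local minimizer of (P). -/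
def StrictLocalMin (f : Euc n → ℝ) (c : Euc n → Euc m) (g : Euc m → EReal)
    (xbar : Euc n) : Prop :=
  c xbar ∈ edom g ∧ ∃ ρ : ℝ, 0 < ρ ∧ ∀ x : Euc n, ‖x - xbar‖ ≤ ρ → c x ∈ edom g → x ≠ xbar →
    (f xbar : EReal) + g (c xbar) < (f x : EReal) + g (c x)

open Classical in
/-- A sequence generated by the safeguarded implicit augmented Lagrangian method
(Algorithm 4.1) for problem (P). -/
structure ALMSeq (n m : ℕ) (f : Euc n → ℝ) (c : Euc n → Euc m) (g : Euc m → EReal) where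
  /-- sufficient-decrease parameter -/
  θ : ℝ
  /-- penalty-reduction parameter -/
  κ : ℝ
  hθ : 0 < θ ∧ θ < 1
  hκ : 0 < κ ∧ κ < 1
  /-- safeguarding set -/
  Y : Set (Euc m)
  hYne : Y.Nonempty
  hYbdd : IsBounded Y
  /-- primal iterates -/
  x : ℕ → Euc n
  /-- auxiliary (certificate) iterates -/
  z : ℕ → Euc m
  /-- safeguarded multiplier estimates -/
  yhat : ℕ → Euc m
  /-- multiplier iterates -/
  y : ℕ → Euc m
  /-- penalty parameters -/
  μ : ℕ → ℝ
  /-- inner tolerances -/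
  ε : ℕ → ℝ
  hyhatY : ∀ k, yhat k ∈ Y
  hεnn : ∀ k, 0 ≤ ε k
  hμthr : ∀ k, BelowThreshold g (μ k)
  /-- `z k ∈ prox_{μ_k g}(c(x^k) + μ_k ŷ^k)` -/
  hprox : ∀ k, ∀ w : Euc m,
    g (z k) + ((‖z k - (c (x k) + μ k • yhat k)‖ ^ 2 / (2 * μ k) : ℝ) : EReal) ≤
      g w + ((‖w - (c (x k) + μ k • yhat k)‖ ^ 2 / (2 * μ k) : ℝ) : EReal)
  /-- dual update rule -/
  hy : ∀ k, y k = yhat k + (μ k)⁻¹ • (c (x k) - z k)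
  /-- approximate stationarity for the subproblem, `‖∇ₓL^S_{μ_k}(x^k,z^k,ŷ^k)‖ ≤ ε_k` -/
  hdual : ∀ k, ‖fderiv ℝ (LagFn f c (y k)) (x k)‖ ≤ ε k
  /-- penalty update rule -/
  hμupd : ∀ k, μ (k + 1) =
    if k = 0 ∨ ‖c (x k) - z k‖ ≤ θ * ‖c (x (k - 1)) - z (k - 1)‖ then μ k else κ * μ k

/-!
The prox step makes `y^k` a regular subgradient of `g` at `z^k`, so `Θ_k` reduces to
`‖∇ₓL(x^k, y^k)‖ + ‖c(x^k) - z^k‖`, which is `O(R_k)` for the distance `R_k` of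
`(x^k, z^k, y^k)` to `(x̄, c(x̄), ȳ)`. Once `ŷ^{k+1} = y^k`, the dual update gives
`‖c(x^{k+1}) - z^{k+1}‖ = μ_{k+1} ‖y^{k+1} - y^k‖ ≤ μ_{k+1} (R_{k+1} + R_k)`. With the error bound
`R_{k+1} ≤ ρ Θ_{k+1}` and `ε_{k+1} = o(Θ_k) = o(R_k)` this gives
`R_{k+1} ≤ ρ (o(R_k) + μ_{k+1} (R_{k+1} + R_k))`, hence `R_{k+1} ≤ q R_k` as soon as `ρ μ_k` is
small, and `R_{k+1} = o(R_k)` when `μ_k → 0`.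
-/

open Asymptotics

/-- `Θ(x, z, y)` without its distance term, which vanishes when `y ∈ ∂g(z)`. -/
def residual (f : Euc n → ℝ) (c : Euc n → Euc m) (x : Euc n) (z y : Euc m) : ℝ :=
  ‖fderiv ℝ (LagFn f c y) x‖ + ‖c x - z‖

def tripleDist (xbar : Euc n) (zbar ybar : Euc m) (x : Euc n) (z y : Euc m) : ℝ :=
  ‖x - xbar‖ + ‖z - zbar‖ + ‖y - ybar‖

lemma tripleDist_nonneg (xbar : Euc n) (zbar ybar : Euc m) (x : Euc n) (z y : Euc m) :
    0 ≤ tripleDist xbar zbar ybar x z y := by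
  unfold tripleDist; positivity

lemma norm_sub_le_tripleDist_add (xbar : Euc n) (zbar ybar : Euc m) (x x' : Euc n)
    (z z' y y' : Euc m) :
    ‖y - y'‖ ≤ tripleDist xbar zbar ybar x z y + tripleDist xbar zbar ybar x' z' y' := by
  refine (norm_sub_le_norm_sub_add_norm_sub y ybar y').trans ?_
  unfold tripleDist
  rw [norm_sub_rev ybar]
  linarith [norm_nonneg (x - xbar), norm_nonneg (z - zbar), norm_nonneg (x' - xbar),
    norm_nonneg (z' - zbar)]

lemma mem_regSubdiff_of_quadratic_minorant {g : Euc m → EReal} {z v : Euc m} {r C : ℝ}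
    (hz : g z = r) (h : ∀ w, ((r + inner ℝ v (w - z) - C * ‖w - z‖ ^ 2 : ℝ) : EReal) ≤ g w) :
    v ∈ regSubdiff g z := by
  have hquot : ∀ w ≠ z, ((-C * ‖w - z‖ : ℝ) : EReal) ≤
      (g w - g z - ((inner ℝ v (w - z) : ℝ) : EReal)) / ((‖w - z‖ : ℝ) : EReal) := by
    intro w hw
    have hd : 0 < ‖w - z‖ := norm_pos_iff.2 (sub_ne_zero.2 hw)
    have hgw_ge := h w
    induction hgw : g w using EReal.rec with
    | bot => rw [hgw] at hgw_ge; exact absurd (le_bot_iff.1 hgw_ge) (EReal.coe_ne_bot _)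
    | top =>
      rw [hz, EReal.top_sub_coe, EReal.top_sub_coe,
        EReal.top_div_of_pos_ne_top (EReal.coe_pos.2 hd) (EReal.coe_ne_top _)]
      exact le_top
    | coe s =>
      rw [hgw, EReal.coe_le_coe_iff] at hgw_ge
      rw [hz, ← EReal.coe_sub, ← EReal.coe_sub, ← EReal.coe_div, EReal.coe_le_coe_iff,
        le_div_iff₀ hd]
      nlinarith
  rcases eq_or_neBot (𝓝[≠] z) with hbot | hne
  · simp [regSubdiff, hbot]
  · have hφ : Tendsto (fun w => ((-C * ‖w - z‖ : ℝ) : EReal)) (𝓝[≠] z) (𝓝 0) :=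
      (((continuous_coe_real_ereal.comp (continuous_const.mul
        (continuous_id.sub continuous_const).norm)).tendsto' z 0 (by simp)).mono_left
          nhdsWithin_le_nhds)
    exact hφ.liminf_eq.symm.le.trans
      (liminf_le_liminf (eventually_nhdsWithin_of_forall hquot))

lemma prox_quadratic_minorant {g : Euc m → EReal} {μ r : ℝ} (hμ : 0 < μ) {u z : Euc m}
    (hz : g z = r) (hmin : ∀ w, g z + ((‖z - u‖ ^ 2 / (2 * μ) : ℝ) : EReal) ≤
      g w + ((‖w - u‖ ^ 2 / (2 * μ) : ℝ) : EReal)) (w : Euc m) :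
    ((r + inner ℝ (μ⁻¹ • (u - z)) (w - z) - (2 * μ)⁻¹ * ‖w - z‖ ^ 2 : ℝ) : EReal) ≤ g w := by
  have hid : r + inner ℝ (μ⁻¹ • (u - z)) (w - z) - (2 * μ)⁻¹ * ‖w - z‖ ^ 2 =
      r + ‖z - u‖ ^ 2 / (2 * μ) - ‖w - u‖ ^ 2 / (2 * μ) := by
    rw [real_inner_smul_left, ← sub_add_sub_cancel w z u, norm_add_sq_real,
      ← neg_sub z u, inner_neg_left, real_inner_comm]
    field_simp
    ring
  rw [hid, EReal.coe_sub, EReal.coe_add, ← hz]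
  exact EReal.sub_le_of_le_add (hmin w)

lemma regSubdiff_subset_limSubdiff {g : Euc m → EReal} {z : Euc m} :
    regSubdiff g z ⊆ limSubdiff g z := fun v hv =>
  ⟨fun _ => z, fun _ => v, tendsto_const_nhds, tendsto_const_nhds, tendsto_const_nhds,
    fun _ => hv⟩

lemma Theta_eq_of_mem_limSubdiff {f : Euc n → ℝ} {c : Euc n → Euc m} {g : Euc m → EReal}
    {z y : Euc m} (hy : y ∈ limSubdiff g z) (x : Euc n) :
    Theta f c g x z y = residual f c x z y := by
  have hdist : ⨅ v ∈ limSubdiff g z, ((‖y - v‖ : ℝ) : EReal) = 0 :=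
    le_antisymm ((iInf₂_le y hy).trans (by simp))
      (le_iInf₂ fun v _ => EReal.coe_nonneg.2 (norm_nonneg _))
  rw [Theta, hdist, add_zero, residual]

lemma hasFDerivAt_LagFn {f : Euc n → ℝ} {c : Euc n → Euc m} {x : Euc n}
    (hf : DifferentiableAt ℝ f x) (hc : DifferentiableAt ℝ c x) (y : Euc m) :
    HasFDerivAt (LagFn f c y) (fderiv ℝ f x + (innerSL ℝ y).comp (fderiv ℝ c x)) x :=
  hf.hasFDerivAt.add ((innerSL ℝ y).hasFDerivAt.comp x hc.hasFDerivAt)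

lemma contDiff_fderiv_LagFn {f : Euc n → ℝ} {c : Euc n → Euc m}
    (hf : ContDiff ℝ 2 f) (hc : ContDiff ℝ 2 c) :
    ContDiff ℝ 1 (fun p : Euc n × Euc m => fderiv ℝ (LagFn f c p.2) p.1) := by
  have hgrad : (fun p : Euc n × Euc m => fderiv ℝ (LagFn f c p.2) p.1) =
      fun p => fderiv ℝ f p.1 + (innerSL ℝ p.2).comp (fderiv ℝ c p.1) :=
    funext fun p => (hasFDerivAt_LagFn (hf.differentiable two_ne_zero p.1)
      (hc.differentiable two_ne_zero p.1) p.2).fderiv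
  rw [hgrad]
  exact ((hf.fderiv_right one_add_one_eq_two.le).comp contDiff_fst).add
    (((innerSL ℝ).contDiff.comp contDiff_snd).clm_comp
      ((hc.fderiv_right one_add_one_eq_two.le).comp contDiff_fst))

lemma isBigO_residual {ι : Type*} {l : Filter ι} {f : Euc n → ℝ} {c : Euc n → Euc m}
    (hf : ContDiff ℝ 2 f) (hc : ContDiff ℝ 2 c) {xbar : Euc n} {ybar : Euc m}
    (hstat : gradLagZero f c xbar ybar) {x : ι → Euc n} {y z : ι → Euc m}
    (hxy : Tendsto (fun i => (x i, y i)) l (𝓝 (xbar, ybar))) :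
    (fun i => residual f c (x i) (z i) (y i)) =O[l]
      fun i => tripleDist xbar (c xbar) ybar (x i) (z i) (y i) := by
  set R := fun i => tripleDist xbar (c xbar) ybar (x i) (z i) (y i)
  have hle : ∀ i, ‖x i - xbar‖ ≤ ‖R i‖ ∧ ‖z i - c xbar‖ ≤ ‖R i‖ ∧ ‖y i - ybar‖ ≤ ‖R i‖ :=
    fun i => by
      refine ⟨?_, ?_, ?_⟩ <;> refine le_trans ?_ (le_abs_self _) <;> simp only [R, tripleDist] <;>
        linarith [norm_nonneg (x i - xbar), norm_nonneg (z i - c xbar), norm_nonneg (y i - ybar)]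
  have hxR : (fun i => x i - xbar) =O[l] R := isBigO_of_le l fun i => (hle i).1
  have hzR : (fun i => z i - c xbar) =O[l] R := isBigO_of_le l fun i => (hle i).2.1
  have hyR : (fun i => y i - ybar) =O[l] R := isBigO_of_le l fun i => (hle i).2.2
  have hgrad : (fun i => fderiv ℝ (LagFn f c (y i)) (x i)) =O[l] R := by
    have h := ((contDiff_fderiv_LagFn hf hc).differentiable one_ne_zero
      (xbar, ybar)).hasFDerivAt.isBigO_sub.comp_tendsto hxy
    simp only [Function.comp_def, show fderiv ℝ (LagFn f c ybar) xbar = 0 from hstat,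
      sub_zero] at h
    exact h.trans (hxR.prod_left hyR)
  have hcz : (fun i => c (x i) - z i) =O[l] R := by
    have h := ((hc.differentiable two_ne_zero xbar).hasFDerivAt.isBigO_sub.comp_tendsto
      ((continuous_fst.tendsto _).comp hxy)).trans hxR
    simpa using h.sub hzR
  exact hgrad.norm_left.add hcz.norm_left

namespace ALMSeq

variable {f : Euc n → ℝ} {c : Euc n → Euc m} {g : Euc m → EReal} (A : ALMSeq n m f c g)

lemma μ_pos (k : ℕ) : 0 < A.μ k := (A.hμthr k).1

lemma μ_antitone : Antitone A.μ := antitone_nat_of_succ_le fun k => by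
  rw [A.hμupd k]
  split_ifs
  · exact le_rfl
  · exact mul_le_of_le_one_left (A.μ_pos k).le A.hκ.2.le

lemma norm_c_sub_z (k : ℕ) : ‖c (A.x k) - A.z k‖ = A.μ k * ‖A.y k - A.yhat k‖ := by
  rw [A.hy k, add_sub_cancel_left, norm_smul, Real.norm_of_nonneg (inv_nonneg.2 (A.μ_pos k).le),
    mul_inv_cancel_left₀ (A.μ_pos k).ne']

lemma g_z_ne_top (hg : ∃ w, g w < ⊤) (k : ℕ) : g (A.z k) ≠ ⊤ := by
  obtain ⟨w, hw⟩ := hg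
  intro htop
  have h := A.hprox k w
  rw [htop, EReal.top_add_coe, top_le_iff] at h
  exact (EReal.add_lt_top hw.ne (EReal.coe_ne_top _)).ne h

lemma y_mem_regSubdiff (hg : ProperFn g) (k : ℕ) : A.y k ∈ regSubdiff g (A.z k) := by
  have hy : A.y k = (A.μ k)⁻¹ • (c (A.x k) + A.μ k • A.yhat k - A.z k) := by
    rw [A.hy k, add_sub_right_comm, smul_add, smul_smul, inv_mul_cancel₀ (A.μ_pos k).ne',
      one_smul, add_comm]
  have hz : g (A.z k) = (g (A.z k)).toReal :=
    (EReal.coe_toReal (A.g_z_ne_top hg.2 k) (hg.1 _)).symm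
  rw [hy]
  exact mem_regSubdiff_of_quadratic_minorant hz
    (prox_quadratic_minorant (A.μ_pos k) hz (A.hprox k))

lemma Theta_eq_residual (hg : ProperFn g) (k : ℕ) :
    Theta f c g (A.x k) (A.z k) (A.y k) = residual f c (A.x k) (A.z k) (A.y k) :=
  Theta_eq_of_mem_limSubdiff (regSubdiff_subset_limSubdiff (A.y_mem_regSubdiff hg k)) _

lemma residual_succ_le (xbar : Euc n) (zbar ybar : Euc m) {k : ℕ}
    (hk : A.yhat (k + 1) = A.y k) :
    residual f c (A.x (k + 1)) (A.z (k + 1)) (A.y (k + 1)) ≤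
      A.ε (k + 1) + A.μ (k + 1) * (tripleDist xbar zbar ybar (A.x (k + 1)) (A.z (k + 1))
        (A.y (k + 1)) + tripleDist xbar zbar ybar (A.x k) (A.z k) (A.y k)) := by
  rw [residual, A.norm_c_sub_z, hk]
  exact add_le_add (A.hdual _) (mul_le_mul_of_nonneg_left
    (norm_sub_le_tripleDist_add _ _ _ _ _ _ _ _ _) (A.μ_pos _).le)

lemma tendsto_z (hc : Continuous c) {xbar : Euc n} {ybar : Euc m}
    (hx : Tendsto A.x atTop (𝓝 xbar)) (hy : Tendsto A.y atTop (𝓝 ybar))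
    (hyh : ∀ᶠ k in atTop, A.yhat (k + 1) = A.y k) : Tendsto A.z atTop (𝓝 (c xbar)) := by
  have hV : Tendsto (fun k => c (A.x (k + 1)) - A.z (k + 1)) atTop (𝓝 0) := by
    rw [tendsto_zero_iff_norm_tendsto_zero]
    have hdy : Tendsto (fun k => A.μ 0 * ‖A.y (k + 1) - A.y k‖) atTop (𝓝 0) := by
      simpa using (((tendsto_add_atTop_iff_nat 1).2 hy).sub hy).norm.const_mul (A.μ 0)
    refine squeeze_zero' (.of_forall fun k => norm_nonneg _) ?_ hdy
    filter_upwards [hyh] with k hk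
    rw [A.norm_c_sub_z, hk]
    exact mul_le_mul_of_nonneg_right (A.μ_antitone (Nat.zero_le _)) (norm_nonneg _)
  have hV' := (tendsto_add_atTop_iff_nat (f := fun k => c (A.x k) - A.z k) 1).1 hV
  simpa using ((hc.tendsto xbar).comp hx).sub hV'

end ALMSeq

lemma eventually_le_mul_of_isLittleO {R e ν : ℕ → ℝ} {ρ a : ℝ} (hρ : 0 < ρ) (ha : 0 < a)
    (hR : ∀ k, 0 ≤ R k) (he : e =o[atTop] R)
    (hrec : ∀ᶠ k in atTop, R (k + 1) ≤ ρ * (e k + ν k * (R (k + 1) + R k)))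
    (hν : ∀ᶠ k in atTop, ρ * ν k ≤ min (1 / 2) (a / 8)) :
    ∀ᶠ k in atTop, R (k + 1) ≤ a * R k := by
  filter_upwards [he.def (c := a / (8 * ρ)) (by positivity), hrec, hν] with k hek hk hνk
  have hρe : ρ * e k ≤ a / 8 * R k := calc
    ρ * e k ≤ ρ * (a / (8 * ρ) * ‖R k‖) :=
      mul_le_mul_of_nonneg_left ((le_abs_self _).trans hek) hρ.le
    _ = a / 8 * R k := by rw [Real.norm_of_nonneg (hR k)]; field_simp
  rw [le_min_iff] at hνk
  -- `R (k + 1) ≤ (a / 8) R k + R (k + 1) / 2 + (a / 8) R k`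
  nlinarith [mul_le_mul_of_nonneg_right hνk.1 (hR (k + 1)),
    mul_le_mul_of_nonneg_right hνk.2 (hR k), hR k]

theorem statement19_general {n m : ℕ}
    (f : Euc n → ℝ) (c : Euc n → Euc m) (g : Euc m → EReal)
    (hf : ContDiff ℝ 2 f) (hc : ContDiff ℝ 2 c)
    (hgp : ProperFn g)
    (xbar : Euc n) (ybar : Euc m) (hybar : ybar ∈ Lambda f c g xbar)
    (ρ : ℝ) (hρ : 0 < ρ) (U : Set (Euc n × Euc m × Euc m))
    (hU : U ∈ 𝓝 ((xbar, c xbar, ybar) : Euc n × Euc m × Euc m))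
    (hub : ∀ (x : Euc n) (z y : Euc m), (x, z, y) ∈ U → z ∈ edom g →
      ((‖x - xbar‖ + ‖z - c xbar‖ + ‖y - ybar‖ : ℝ) : EReal) ≤
        (ρ : EReal) * Theta f c g x z y)
    (A : ALMSeq n m f c g)
    (hxy : Tendsto (fun k => (A.x k, A.y k)) atTop (𝓝 (xbar, ybar)))
    (hyh : ∀ᶠ k in atTop, A.yhat (k + 1) = A.y k)
    (hlo : ∀ δ : ℝ, 0 < δ → ∀ᶠ k in atTop,
      (A.ε (k + 1) : EReal) ≤ (δ : EReal) * Theta f c g (A.x k) (A.z k) (A.y k)) :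
    (∀ q : ℝ, 0 < q → q < 1 → ∃ μbar : ℝ, 0 < μbar ∧
      ((∀ᶠ k in atTop, A.μ k ≤ μbar) →
        Tendsto A.z atTop (𝓝 (c xbar)) ∧
        ∀ᶠ k in atTop,
          ‖A.x (k + 1) - xbar‖ + ‖A.z (k + 1) - c xbar‖ + ‖A.y (k + 1) - ybar‖ ≤
            q * (‖A.x k - xbar‖ + ‖A.z k - c xbar‖ + ‖A.y k - ybar‖))) ∧
    ((Antitone A.μ ∧ Tendsto A.μ atTop (𝓝 0)) →
      Tendsto A.z atTop (𝓝 (c xbar)) ∧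
      Tendsto (fun k =>
          (‖A.x (k + 1) - xbar‖ + ‖A.z (k + 1) - c xbar‖ + ‖A.y (k + 1) - ybar‖) /
            (‖A.x k - xbar‖ + ‖A.z k - c xbar‖ + ‖A.y k - ybar‖)) atTop (𝓝 0)) := by
  have hx : Tendsto A.x atTop (𝓝 xbar) := (continuous_fst.tendsto _).comp hxy
  have hy : Tendsto A.y atTop (𝓝 ybar) := (continuous_snd.tendsto _).comp hxy
  have hz := A.tendsto_z hc.continuous hx hy hyh
  set R : ℕ → ℝ := fun k => tripleDist xbar (c xbar) ybar (A.x k) (A.z k) (A.y k)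
  have hR : ∀ k, 0 ≤ R k := fun k => tripleDist_nonneg _ _ _ _ _ _
  have hRT : ∀ᶠ k in atTop, R k ≤ ρ * residual f c (A.x k) (A.z k) (A.y k) := by
    filter_upwards [hx.prodMk_nhds (hz.prodMk_nhds hy) hU] with k hk
    have h := hub _ _ _ hk (lt_top_iff_ne_top.2 (A.g_z_ne_top hgp.2 k))
    rwa [A.Theta_eq_residual hgp, ← EReal.coe_mul, EReal.coe_le_coe_iff] at h
  have hεR : (fun k => A.ε (k + 1)) =o[atTop] R := by
    refine (IsLittleO.of_bound fun δ hδ => ?_).trans_isBigO (isBigO_residual hf hc hybar.1 hxy)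
    filter_upwards [hlo δ hδ] with k hk
    rw [A.Theta_eq_residual hgp, ← EReal.coe_mul, EReal.coe_le_coe_iff] at hk
    rwa [Real.norm_of_nonneg (A.hεnn _), Real.norm_of_nonneg (by unfold residual; positivity)]
  have hrec : ∀ᶠ k in atTop,
      R (k + 1) ≤ ρ * (A.ε (k + 1) + A.μ (k + 1) * (R (k + 1) + R k)) := by
    filter_upwards [(tendsto_add_atTop_nat 1).eventually hRT, hyh] with k hk hyk
    exact hk.trans (mul_le_mul_of_nonneg_left (A.residual_succ_le _ _ _ hyk) hρ.le)
  have hlin : ∀ a > 0, (∀ᶠ k in atTop, ρ * A.μ (k + 1) ≤ min (1 / 2) (a / 8)) →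
      ∀ᶠ k in atTop, R (k + 1) ≤ a * R k :=
    fun a ha hμ => eventually_le_mul_of_isLittleO hρ ha hR hεR hrec hμ
  refine ⟨fun q hq _ => ⟨min (1 / 2) (q / 8) / ρ, by positivity, fun hμ => ⟨hz, hlin q hq ?_⟩⟩,
    fun ⟨_, hμ0⟩ => ⟨hz, ?_⟩⟩
  · filter_upwards [(tendsto_add_atTop_nat 1).eventually hμ] with k hk
    rwa [le_div_iff₀' hρ] at hk
  · have hρμ : Tendsto (fun k => ρ * A.μ k) atTop (𝓝 0) := by simpa using hμ0.const_mul ρ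
    have hsuper : (fun k => R (k + 1)) =o[atTop] R := IsLittleO.of_bound fun a ha => by
      filter_upwards [hlin a ha ((tendsto_add_atTop_nat 1).eventually
        (hρμ.eventually_le_const (by positivity)))] with k hk
      rwa [Real.norm_of_nonneg (hR _), Real.norm_of_nonneg (hR _)]
    exact hsuper.tendsto_div_nhds_zero

theorem statement19 {n m : ℕ}
    (f : Euc n → ℝ) (c : Euc n → Euc m) (g : Euc m → EReal)
    (hf : ContDiff ℝ 2 f) (hc : ContDiff ℝ 2 c)
    (hgp : ProperFn g) (hglsc : LowerSemicontinuous g) (hgpb : ProxBounded g)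
    (hphi : ∃ r : ℝ, (⨅ x : Euc n, ((f x : EReal) + g (c x))) = (r : EReal))
    (xbar : Euc n) (ybar : Euc m) (hybar : ybar ∈ Lambda f c g xbar)
    (ρ : ℝ) (hρ : 0 < ρ) (U : Set (Euc n × Euc m × Euc m))
    (hU : U ∈ 𝓝 ((xbar, c xbar, ybar) : Euc n × Euc m × Euc m))
    (hub : ∀ (x : Euc n) (z y : Euc m), (x, z, y) ∈ U → z ∈ edom g →
      ((‖x - xbar‖ + ‖z - c xbar‖ + ‖y - ybar‖ : ℝ) : EReal) ≤
        (ρ : EReal) * Theta f c g x z y)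
    (A : ALMSeq n m f c g)
    (hε0 : Tendsto A.ε atTop (𝓝 0))
    (hxy : Tendsto (fun k => (A.x k, A.y k)) atTop (𝓝 (xbar, ybar)))
    (hyh : ∀ᶠ k in atTop, A.yhat (k + 1) = A.y k)
    (hlo : ∀ δ : ℝ, 0 < δ → ∀ᶠ k in atTop,
      (A.ε (k + 1) : EReal) ≤ (δ : EReal) * Theta f c g (A.x k) (A.z k) (A.y k)) :
    (∀ q : ℝ, 0 < q → q < 1 → ∃ μbar : ℝ, 0 < μbar ∧
      ((∀ᶠ k in atTop, A.μ k ≤ μbar) →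
        Tendsto A.z atTop (𝓝 (c xbar)) ∧
        ∀ᶠ k in atTop,
          ‖A.x (k + 1) - xbar‖ + ‖A.z (k + 1) - c xbar‖ + ‖A.y (k + 1) - ybar‖ ≤
            q * (‖A.x k - xbar‖ + ‖A.z k - c xbar‖ + ‖A.y k - ybar‖))) ∧
    ((Antitone A.μ ∧ Tendsto A.μ atTop (𝓝 0)) →
      Tendsto A.z atTop (𝓝 (c xbar)) ∧
      Tendsto (fun k =>
          (‖A.x (k + 1) - xbar‖ + ‖A.z (k + 1) - c xbar‖ + ‖A.y (k + 1) - ybar‖) /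
            (‖A.x k - xbar‖ + ‖A.z k - c xbar‖ + ‖A.y k - ybar‖)) atTop (𝓝 0)) :=
  statement19_general f c g hf hc hgp xbar ybar hybar ρ hρ U hU hub A hxy hyh hlo

end Paper
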